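/- Let P be a point of PG(2,q^3) such that P, P^q and P^{q^2} are not collinear. Then the number of distinct subsets C of PG(2,q^3) such that C is the zero locus of the base change to K of some nonzero quadratic form on F^3 and P ∈ C, is exactly q^2+q+1. -/

import Mathlib

open scoped LinearAlgebra.Projectivization

/-- A point of `PG(2,K)` is `F`-rational if it has a representative vector all of whose
coordinates lie in the image of `F` in `K`. -/
def IsRationalPoint (F K : Type*) [Field F] [Field K] [Algebra F K]
    (x : ℙ K (Fin 3 → K)) : Prop :=
  ∃ v : Fin 3 → K, (∀ i, v i ∈ Set.range (algebraMap F K)) ∧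
    ∃ h : v ≠ 0, x = Projectivization.mk K v h

/-- The lines of `PG(2,K)` are the projectivizations of the 2-dimensional `K`-subspaces
of `K^3`; this is the set of points of the line corresponding to such a subspace `W`. -/
def linePoints (K : Type*) [Field K] (W : Submodule K (Fin 3 → K)) :
    Set (ℙ K (Fin 3 → K)) :=
  {x | x.submodule ≤ W}

/-- Three points of `PG(2,K)` are collinear if they lie on a common line. -/
def Collinear3 (K : Type*) [Field K] (x y z : ℙ K (Fin 3 → K)) : Prop :=
  ∃ W : Submodule K (Fin 3 → K), Module.finrank K W = 2 ∧
    x ∈ linePoints K W ∧ y ∈ linePoints K W ∧ z ∈ linePoints K W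

/-- The value at `v : K^3` of the base change to `K` of a quadratic form `Q` on `F^3`:
writing `v = ∑ vᵢ eᵢ` in the standard basis, the base-changed form is
`∑ᵢ vᵢ² Q(eᵢ) + ∑_{i<j} vᵢ vⱼ polar(Q)(eᵢ,eⱼ)`, with the coefficients mapped into `K`. -/
def evalBaseChange (F K : Type*) [Field F] [Field K] [Algebra F K]
    (Q : QuadraticForm F (Fin 3 → F)) (v : Fin 3 → K) : K :=
  (∑ i, v i ^ 2 * algebraMap F K (Q (Pi.single i 1))) +
    ∑ i, ∑ j, if i < j then
      v i * v j * algebraMap F K (QuadraticMap.polar Q (Pi.single i 1) (Pi.single j 1))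
    else 0

/-- The base change of `Q` to `K` vanishes at the point `x` of `PG(2,K)`, i.e. it vanishes
at every representative vector of `x`. -/
def VanishesAt (F K : Type*) [Field F] [Field K] [Algebra F K]
    (Q : QuadraticForm F (Fin 3 → F)) (x : ℙ K (Fin 3 → K)) : Prop :=
  ∀ (v : Fin 3 → K) (h : v ≠ 0), x = Projectivization.mk K v h → evalBaseChange F K Q v = 0

/-- The zero locus in `PG(2,K)` of the base change to `K` of a quadratic form on `F^3`:
the set of points all of whose representative vectors are zeros of the form. -/
def zeroLocus (F K : Type*) [Field F] [Field K] [Algebra F K]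
    (Q : QuadraticForm F (Fin 3 → F)) : Set (ℙ K (Fin 3 → K)) :=
  {x | VanishesAt F K Q x}


/-!
Let `σ` be the Frobenius `x ↦ x ^ q`, a generator of order 3 of `Gal(K/F)`. If the base change of
`Q` vanishes at `v`, it also vanishes at `σ v` and `σ² v`, so in the basis `(v, σ v, σ² v)` of `K³`
it reads `σ b · x y + b · x z + σ² b · y z`, where `b` is its polar form at `(v, σ² v)`. Hence
`Q ↦ b` is an injective `F`-linear map from the space `N` of forms vanishing at `v` into `K`. As `N`
is the kernel of an `F`-linear map from the 6-dimensional space of forms to the 3-dimensional `K`,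
`dim N = 3`. Two forms in `N` with the same zero locus have proportional coefficient triples (the
conic has enough points with nonzero coordinates), and the ratio is `σ`-invariant, hence lies in
`F`. So the conics through `P` are the points of the projective plane `ℙ(N)`: `q² + q + 1` of them.
-/

open QuadraticMap

theorem QuadraticMap.map_smul_add_smul_add_smul {R M : Type*} [CommRing R] [AddCommGroup M]
    [Module R M] (G : QuadraticMap R M R) (x y z : R) (a b c : M) :
    G (x • a + y • b + z • c) = x * x * G a + y * y * G b + z * z * G c
      + x * y * polar G a b + x * z * polar G a c + y * z * polar G b c := by
  rw [QuadraticMap.map_add G, QuadraticMap.map_add G]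
  simp only [polar_add_left, polar_smul_left, polar_smul_right, QuadraticMap.map_smul,
    smul_eq_mul]
  ring

theorem QuadraticMap.linearIndependent_proj {R : Type*} [CommRing R] :
    LinearIndependent R (![proj 0 0, proj 1 1, proj 2 2, proj 0 1, proj 0 2, proj 1 2] :
      Fin 6 → QuadraticMap R (Fin 3 → R) R) := by
  rw [Fintype.linearIndependent_iff]
  intro g hg
  have h : ∀ x : Fin 3 → R, g 0 * (x 0 * x 0) + g 1 * (x 1 * x 1) + g 2 * (x 2 * x 2)
      + g 3 * (x 0 * x 1) + g 4 * (x 0 * x 2) + g 5 * (x 1 * x 2) = 0 := fun x => by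
    simpa [Fin.sum_univ_six] using congrArg (fun G => G x) hg
  have h0 := h ![1, 0, 0]
  have h1 := h ![0, 1, 0]
  have h2 := h ![0, 0, 1]
  have h01 := h ![1, 1, 0]
  have h02 := h ![1, 0, 1]
  have h12 := h ![0, 1, 1]
  simp only [Matrix.cons_val_zero, Matrix.cons_val_one, Matrix.cons_val, mul_one, mul_zero,
    add_zero, zero_add] at h0 h1 h2 h01 h02 h12
  have h3 : g 3 = 0 := by linear_combination h01 - h0 - h1
  have h4 : g 4 = 0 := by linear_combination h02 - h0 - h2
  have h5 : g 5 = 0 := by linear_combination h12 - h1 - h2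
  intro i
  fin_cases i
  exacts [h0, h1, h2, h3, h4, h5]

theorem QuadraticForm.finiteDimensional_pi {F ι : Type*} [Field F] [Fintype ι] [LinearOrder ι] :
    FiniteDimensional F (QuadraticForm F (ι → F)) :=
  Module.Finite.of_injective (toBilinHom (N := F) F (Pi.basisFun F ι)) fun Q Q' h => by
    rw [← Q.toQuadraticMap_toBilin (Pi.basisFun F ι), ← Q'.toQuadraticMap_toBilin (Pi.basisFun F ι)]
    exact congrArg LinearMap.BilinMap.toQuadraticMap h

theorem LinearIndependent.smul_add_smul_add_smul_ne_zero {K V : Type*} [Field K] [AddCommGroup V]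
    [Module K V] {a b c : V} (hli : LinearIndependent K ![a, b, c]) {x : K} (hx : x ≠ 0)
    (y z : K) : x • a + y • b + z • c ≠ 0 := fun h =>
  hx (Fintype.linearIndependent_iff.1 hli ![x, y, z] (by simpa [Fin.sum_univ_three] using h) 0)

theorem linearIndependent_of_not_collinear3 {K : Type*} [Field K] {a b c : Fin 3 → K}
    (ha : a ≠ 0) (hb : b ≠ 0) (hc : c ≠ 0)
    (h : ¬ Collinear3 K (Projectivization.mk K a ha) (Projectivization.mk K b hb)
      (Projectivization.mk K c hc)) :
    LinearIndependent K ![a, b, c] := by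
  by_contra hli
  have hlt : Submodule.span K (Set.range ![a, b, c]) < ⊤ := lt_top_iff_ne_top.2 fun htop =>
    hli (linearIndependent_of_top_le_span_of_card_eq_finrank htop.ge (by simp))
  obtain ⟨f, hf, hmap⟩ := Submodule.exists_dual_map_eq_bot_of_lt_top hlt inferInstance
  have hker : ∀ i, ![a, b, c] i ∈ LinearMap.ker f := fun i =>
    LinearMap.le_ker_iff_map.2 hmap (Submodule.subset_span ⟨i, rfl⟩)
  have hmem : ∀ (u : Fin 3 → K) (hu : u ≠ 0), u ∈ LinearMap.ker f →
      Projectivization.mk K u hu ∈ linePoints K (LinearMap.ker f) := fun u hu huf => by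
    rwa [linePoints, Set.mem_ofPred_eq, Projectivization.submodule_mk,
      Submodule.span_singleton_le_iff_mem]
  refine h ⟨LinearMap.ker f, ?_, hmem a ha (hker 0), hmem b hb (hker 1), hmem c hc (hker 2)⟩
  have := f.finrank_ker_add_one_of_ne_zero hf
  simp only [Module.finrank_fin_fun] at this
  omega

open Polynomial in
theorem FiniteField.mem_range_algebraMap_of_pow_card_eq_self {F K : Type*} [Field F] [Fintype F]
    [Field K] [Algebra F K] {x : K} (hx : x ^ Fintype.card F = x) :
    x ∈ Set.range (algebraMap F K) := by
  have hroots := roots_map_of_injective_of_card_eq_natDegree (algebraMap F K).injective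
    (p := X ^ Fintype.card F - X) (by
      rw [FiniteField.roots_X_pow_card_sub_X,
        FiniteField.X_pow_card_sub_X_natDegree_eq _ Fintype.one_lt_card]
      simp)
  have hmem : x ∈ ((X ^ Fintype.card F - X : F[X]).map (algebraMap F K)).roots := by
    rw [mem_roots (Polynomial.map_ne_zero
      (FiniteField.X_pow_card_sub_X_ne_zero F Fintype.one_lt_card))]
    simp [hx]
  obtain ⟨c, -, rfl⟩ := Multiset.mem_map.1 (hroots ▸ hmem)
  exact ⟨c, rfl⟩

theorem exists_eq_smul_of_zeros_subset {K : Type*} [Field K] [Fintype K]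
    (hK : 4 ≤ Fintype.card K) {a b c a' b' c' : K} (ha : a ≠ 0) (hc : c ≠ 0)
    (h : ∀ x y z : K, x ≠ 0 → y ≠ 0 → z ≠ 0 → a * (x * y) + b * (x * z) + c * (y * z) = 0 →
      a' * (x * y) + b' * (x * z) + c' * (y * z) = 0) :
    ∃ μ, a' = μ * a ∧ b' = μ * b ∧ c' = μ * c := by
  classical
  -- `(s₁ s₂, s₀ s₂, s₀ s₁)` is a zero of `a x y + b x z + c y z` whenever `c s₀ + b s₁ + a s₂ = 0`;
  -- take `s = (b + t a, -c, -t c)`.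
  have hline : ∀ t, t ≠ 0 → b + t * a ≠ 0 → (c' * b - b' * c) + t * (c' * a - a' * c) = 0 := by
    intro t ht hbt
    have := h (t * c ^ 2) (-((b + t * a) * t * c)) (-((b + t * a) * c))
      (by simp [ht, hc]) (by simp [ht, hc, hbt]) (by simp [hc, hbt]) (by ring)
    have hne : (b + t * a) * t * c ^ 2 ≠ 0 := by simp [ht, hc, hbt]
    refine (mul_eq_zero.1 ?_).resolve_left hne
    linear_combination this
  have hgood : ∀ t ∈ Finset.univ \ {0, -b / a}, t ≠ 0 ∧ b + t * a ≠ 0 := by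
    intro t ht
    simp only [Finset.mem_sdiff, Finset.mem_univ, Finset.mem_insert, Finset.mem_singleton,
      true_and, not_or] at ht
    refine ⟨ht.1, fun h0 => ht.2 ?_⟩
    field_simp
    linear_combination h0
  have hcard : 1 < (Finset.univ \ {0, -b / a}).card := by
    have := Finset.le_card_sdiff {0, -b / a} (Finset.univ : Finset K)
    have := Finset.card_le_two (a := (0 : K)) (b := -b / a)
    rw [Finset.card_univ] at *
    omega
  obtain ⟨t₁, ht₁, t₂, ht₂, hne⟩ := Finset.one_lt_card.1 hcard
  have e₁ := hline t₁ (hgood t₁ ht₁).1 (hgood t₁ ht₁).2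
  have e₂ := hline t₂ (hgood t₂ ht₂).1 (hgood t₂ ht₂).2
  have hB : c' * a - a' * c = 0 :=
    (mul_eq_zero.1 (by linear_combination e₁ - e₂ : (t₁ - t₂) * (c' * a - a' * c) = 0)).resolve_left
      (sub_ne_zero.2 hne)
  have hA : c' * b - b' * c = 0 := by linear_combination e₁ - t₁ * hB
  refine ⟨c' / c, ?_, ?_, ?_⟩ <;> field_simp
  · linear_combination -hB
  · linear_combination -hA

section BaseChange
variable {F K L : Type*} [Field F] [Field K] [Field L] [Algebra F K] [Algebra F L]

noncomputable def baseChangeForm (Q : QuadraticForm F (Fin 3 → F)) :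
    QuadraticForm K (Fin 3 → K) :=
  (∑ i, algebraMap F K (Q (Pi.single i 1)) • proj i i) +
    ∑ i, ∑ j, (if i < j then algebraMap F K (polar Q (Pi.single i 1) (Pi.single j 1)) else 0) •
      proj i j

theorem coe_baseChangeForm (Q : QuadraticForm F (Fin 3 → F)) :
    ⇑(baseChangeForm (K := K) Q) = evalBaseChange F K Q := by
  ext w
  simp only [baseChangeForm, evalBaseChange, add_apply, sum_apply, smul_apply, proj_apply,
    smul_eq_mul]
  simp only [mul_ite, mul_zero, _root_.sq, mul_comm]

theorem evalBaseChange_comp (f : K →ₐ[F] L) (Q : QuadraticForm F (Fin 3 → F)) (w : Fin 3 → K) :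
    evalBaseChange F L Q (f ∘ w) = f (evalBaseChange F K Q w) := by
  simp [evalBaseChange, map_sum, apply_ite]

theorem polar_evalBaseChange_comp (f : K →ₐ[F] L) (Q : QuadraticForm F (Fin 3 → F))
    (a b : Fin 3 → K) :
    polar (evalBaseChange F L Q) (f ∘ a) (f ∘ b) = f (polar (evalBaseChange F K Q) a b) := by
  have hadd : f ∘ a + f ∘ b = f ∘ (a + b) := by ext; simp
  rw [polar, polar, hadd, evalBaseChange_comp, evalBaseChange_comp, evalBaseChange_comp,
    map_sub, map_sub]

theorem evalBaseChange_self (Q : QuadraticForm F (Fin 3 → F)) (x : Fin 3 → F) :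
    evalBaseChange F F Q x = Q x := by
  have hx : x = x 0 • Pi.single 0 1 + x 1 • Pi.single 1 1 + x 2 • Pi.single 2 1 := by
    ext i; fin_cases i <;> simp
  rw [hx, Q.map_smul_add_smul_add_smul]
  simp only [evalBaseChange, Fin.sum_univ_three, Pi.add_apply, Pi.smul_apply, smul_eq_mul,
    Algebra.algebraMap_self, RingHom.id_apply, Pi.single_eq_same, Pi.single_eq_of_ne, ne_eq,
    Fin.reduceEq, not_false_eq_true, Fin.reduceLT, lt_self_iff_false, not_lt_zero, ↓reduceIte,
    mul_one, mul_zero, add_zero, zero_add]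
  ring

theorem evalBaseChange_algebraMap (Q : QuadraticForm F (Fin 3 → F)) (x : Fin 3 → F) :
    evalBaseChange F K Q (algebraMap F K ∘ x) = algebraMap F K (Q x) := by
  rw [← evalBaseChange_self Q x]
  exact evalBaseChange_comp (Algebra.ofId F K) Q x

theorem evalBaseChange_add (Q Q' : QuadraticForm F (Fin 3 → F)) (w : Fin 3 → K) :
    evalBaseChange F K (Q + Q') w = evalBaseChange F K Q w + evalBaseChange F K Q' w := by
  simp only [evalBaseChange, add_apply, FunLike.coe_add, polar_add, map_add, mul_add,
    Finset.sum_add_distrib, ite_add_zero]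
  ring

theorem evalBaseChange_smul (c : F) (Q : QuadraticForm F (Fin 3 → F)) (w : Fin 3 → K) :
    evalBaseChange F K (c • Q) w = algebraMap F K c * evalBaseChange F K Q w := by
  simp only [evalBaseChange, smul_apply, FunLike.coe_smul, polar_smul, smul_eq_mul, map_mul,
    mul_add, Finset.mul_sum, mul_ite, mul_zero]
  congr 1 <;> simp only [mul_left_comm]

noncomputable def evalBaseChangeₗ (w : Fin 3 → K) : QuadraticForm F (Fin 3 → F) →ₗ[F] K where
  toFun Q := evalBaseChange F K Q w
  map_add' Q Q' := evalBaseChange_add Q Q' w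
  map_smul' c Q := by rw [evalBaseChange_smul, Algebra.smul_def]; rfl

noncomputable def polarBaseChangeₗ (a b : Fin 3 → K) : QuadraticForm F (Fin 3 → F) →ₗ[F] K :=
  evalBaseChangeₗ (a + b) - evalBaseChangeₗ a - evalBaseChangeₗ b

@[simp]
theorem evalBaseChangeₗ_apply (w : Fin 3 → K) (Q : QuadraticForm F (Fin 3 → F)) :
    evalBaseChangeₗ w Q = evalBaseChange F K Q w := rfl

@[simp]
theorem polarBaseChangeₗ_apply (a b : Fin 3 → K) (Q : QuadraticForm F (Fin 3 → F)) :
    polarBaseChangeₗ a b Q = polar (evalBaseChange F K Q) a b := rfl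

theorem mk_mem_zeroLocus_iff (Q : QuadraticForm F (Fin 3 → F)) {w : Fin 3 → K} (hw : w ≠ 0) :
    Projectivization.mk K w hw ∈ zeroLocus F K Q ↔ evalBaseChange F K Q w = 0 := by
  refine ⟨fun h => h w hw rfl, fun h u hu hwu => ?_⟩
  obtain ⟨a, rfl⟩ := (Projectivization.mk_eq_mk_iff K u w hu hw).1 hwu.symm
  rw [← coe_baseChangeForm, Units.smul_def, QuadraticMap.map_smul, coe_baseChangeForm, h,
    smul_zero]

theorem zeroLocus_smul {c : F} (hc : c ≠ 0) (Q : QuadraticForm F (Fin 3 → F)) :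
    zeroLocus F K (c • Q) = zeroLocus F K Q := by
  ext x
  simp only [zeroLocus, VanishesAt, Set.mem_ofPred_eq, evalBaseChange_smul, mul_eq_zero,
    (FaithfulSMul.algebraMap_eq_zero_iff F K).not.2 hc, false_or]

end BaseChange

section Orbit
variable {F K : Type*} [Field F] [Field K] [Algebra F K] {σ : K →ₐ[F] K}
  (hσ : ∀ x, σ (σ (σ x)) = x) {v : Fin 3 → K}
include hσ

theorem evalBaseChange_orbit_coords (Q : QuadraticForm F (Fin 3 → F))
    (hQv : evalBaseChange F K Q v = 0) (x y z : K) :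
    evalBaseChange F K Q (x • v + y • (σ ∘ v) + z • (σ ∘ σ ∘ v)) =
      σ (polar (evalBaseChange F K Q) v (σ ∘ σ ∘ v)) * (x * y)
        + polar (evalBaseChange F K Q) v (σ ∘ σ ∘ v) * (x * z)
        + σ (σ (polar (evalBaseChange F K Q) v (σ ∘ σ ∘ v))) * (y * z) := by
  have hv : σ ∘ σ ∘ σ ∘ v = v := funext fun i => hσ (v i)
  have h1 : evalBaseChange F K Q (σ ∘ v) = 0 := by rw [evalBaseChange_comp, hQv, map_zero]
  have h2 : evalBaseChange F K Q (σ ∘ σ ∘ v) = 0 := by rw [evalBaseChange_comp, h1, map_zero]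
  have p01 : polar (evalBaseChange F K Q) v (σ ∘ v) =
      σ (polar (evalBaseChange F K Q) v (σ ∘ σ ∘ v)) := by
    rw [← polar_comm, ← polar_evalBaseChange_comp, hv]
  have p12 : polar (evalBaseChange F K Q) (σ ∘ v) (σ ∘ σ ∘ v) =
      σ (σ (polar (evalBaseChange F K Q) v (σ ∘ σ ∘ v))) := by
    rw [polar_evalBaseChange_comp, p01]
  rw [← coe_baseChangeForm, map_smul_add_smul_add_smul, coe_baseChangeForm, hQv, h1, h2, p01,
    p12]
  ring

variable (hli : LinearIndependent K ![v, σ ∘ v, σ ∘ σ ∘ v])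
include hli

theorem eq_zero_of_polar_orbit_eq_zero {Q : QuadraticForm F (Fin 3 → F)}
    (hQv : evalBaseChange F K Q v = 0) (hb : polar (evalBaseChange F K Q) v (σ ∘ σ ∘ v) = 0) :
    Q = 0 := by
  have hspan := hli.span_eq_top_of_card_eq_finrank (by simp)
  have hvanish : ∀ w, evalBaseChange F K Q w = 0 := fun w => by
    obtain ⟨r, rfl⟩ :=
      (Submodule.mem_span_range_iff_exists_fun K).1 (hspan ▸ Submodule.mem_top (x := w))
    simp only [Fin.sum_univ_three, Matrix.cons_val_zero, Matrix.cons_val_one,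
      Matrix.cons_val_two, Matrix.head_cons, Matrix.tail_cons]
    rw [evalBaseChange_orbit_coords hσ Q hQv, hb, map_zero, map_zero]
    ring
  ext x
  rw [zero_apply, ← (algebraMap F K).injective.eq_iff, map_zero, ← evalBaseChange_algebraMap,
    hvanish]

theorem exists_eq_smul_of_zeroLocus_subset [Fintype K] (hK : 4 ≤ Fintype.card K)
    (hfix : ∀ x, σ x = x → x ∈ Set.range (algebraMap F K)) {Q Q' : QuadraticForm F (Fin 3 → F)}
    (hQ : Q ≠ 0) (hQv : evalBaseChange F K Q v = 0) (hQ'v : evalBaseChange F K Q' v = 0)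
    (hsub : zeroLocus F K Q ⊆ zeroLocus F K Q') :
    ∃ c : F, Q' = c • Q := by
  set b := polar (evalBaseChange F K Q) v (σ ∘ σ ∘ v) with hb_def
  set b' := polar (evalBaseChange F K Q') v (σ ∘ σ ∘ v) with hb'_def
  have hb : b ≠ 0 := fun h => hQ (eq_zero_of_polar_orbit_eq_zero hσ hli hQv h)
  obtain ⟨μ, hσμ, hμ, -⟩ := exists_eq_smul_of_zeros_subset (a := σ b) (c := σ (σ b))
    (a' := σ b') (b' := b') (c' := σ (σ b')) hK (by simpa using hb) (by simpa using hb)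
    fun x y z hx _ _ hxyz => by
      have hw := hli.smul_add_smul_add_smul_ne_zero hx y z
      have hmem := (mk_mem_zeroLocus_iff Q hw).2 (by rwa [evalBaseChange_orbit_coords hσ Q hQv])
      rw [← evalBaseChange_orbit_coords hσ Q' hQ'v, ← mk_mem_zeroLocus_iff Q' hw]
      exact hsub hmem
  have hμ_fixed : σ μ = μ := by
    apply mul_right_cancel₀ ((map_ne_zero σ).2 hb)
    rw [← map_mul, ← hμ, hσμ]
  obtain ⟨c, rfl⟩ := hfix μ hμ_fixed
  refine ⟨c, sub_eq_zero.1 (eq_zero_of_polar_orbit_eq_zero hσ hli ?_ ?_)⟩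
  · rw [← evalBaseChangeₗ_apply, map_sub, map_smul]
    simp [hQv, hQ'v]
  · rw [← polarBaseChangeₗ_apply, map_sub, map_smul]
    simp only [polarBaseChangeₗ_apply, ← hb_def, ← hb'_def, hμ, Algebra.smul_def, sub_self]

theorem finrank_ker_evalBaseChangeₗ (hK : Module.finrank F K = 3) :
    Module.finrank F (LinearMap.ker (evalBaseChangeₗ (F := F) v)) = 3 := by
  have := QuadraticForm.finiteDimensional_pi (F := F) (ι := Fin 3)
  have : FiniteDimensional F K := Module.finite_of_finrank_eq_succ hK
  have hinj : Function.Injective ((polarBaseChangeₗ v (σ ∘ σ ∘ v)).domRestrict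
      (LinearMap.ker (evalBaseChangeₗ (F := F) v))) := by
    refine (injective_iff_map_eq_zero _).2 ?_
    rintro ⟨Q, hQ⟩ hb
    exact Subtype.ext (eq_zero_of_polar_orbit_eq_zero hσ hli hQ hb)
  have hker_le := LinearMap.finrank_le_finrank_of_injective hinj
  have hforms : 6 ≤ Module.finrank F (QuadraticForm F (Fin 3 → F)) := by
    simpa using QuadraticMap.linearIndependent_proj.fintype_card_le_finrank
  have hrange := Submodule.finrank_le (LinearMap.range (evalBaseChangeₗ (F := F) v))
  have := LinearMap.finrank_range_add_finrank_ker (evalBaseChangeₗ (F := F) v)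
  omega

theorem ncard_conics_through_eq_card_projectivization [Fintype K] (hK : 4 ≤ Fintype.card K)
    (hfix : ∀ x, σ x = x → x ∈ Set.range (algebraMap F K)) (hv : v ≠ 0) :
    {C : Set (ℙ K (Fin 3 → K)) |
        (∃ Q : QuadraticForm F (Fin 3 → F), Q ≠ 0 ∧ C = zeroLocus F K Q) ∧
        Projectivization.mk K v hv ∈ C}.ncard =
      Nat.card (ℙ F (LinearMap.ker (evalBaseChangeₗ (F := F) v))) := by
  set N := LinearMap.ker (evalBaseChangeₗ (F := F) v)
  have hrep_ne (p : ℙ F N) : (p.rep : QuadraticForm F (Fin 3 → F)) ≠ 0 := fun h =>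
    p.rep_nonzero (Subtype.ext h)
  have hrange : {C : Set (ℙ K (Fin 3 → K)) |
      (∃ Q : QuadraticForm F (Fin 3 → F), Q ≠ 0 ∧ C = zeroLocus F K Q) ∧
        Projectivization.mk K v hv ∈ C} =
      Set.range fun p : ℙ F N => zeroLocus F K (p.rep : QuadraticForm F (Fin 3 → F)) := by
    ext C
    constructor
    · rintro ⟨⟨Q, hQ, rfl⟩, hvC⟩
      have hQN : Q ∈ N := (mk_mem_zeroLocus_iff Q hv).1 hvC
      have hQN0 : (⟨Q, hQN⟩ : N) ≠ 0 := (Submodule.mk_eq_zero N hQN).not.2 hQ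
      obtain ⟨a, ha⟩ := Projectivization.exists_smul_eq_mk_rep (V := N) F ⟨Q, hQN⟩ hQN0
      refine ⟨Projectivization.mk F _ hQN0, ?_⟩
      simp only [← ha, Submodule.coe_smul, Units.smul_def, zeroLocus_smul a.ne_zero]
    · rintro ⟨p, rfl⟩
      exact ⟨⟨_, hrep_ne p, rfl⟩, (mk_mem_zeroLocus_iff _ hv).2 p.rep.2⟩
  rw [hrange, Set.ncard_range_of_injective]
  intro p p' h
  obtain ⟨c, hc⟩ := exists_eq_smul_of_zeroLocus_subset hσ hli hK hfix (hrep_ne p) p.rep.2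
    p'.rep.2 h.subset
  rw [← p.mk_rep, ← p'.mk_rep, eq_comm, Projectivization.mk_eq_mk_iff']
  exact ⟨c, Subtype.ext hc.symm⟩

end Orbit

/-- Let `P` be a point of `PG(2,q^3)` (with representative vector `v`) such that `P`, `P^q`
and `P^{q^2}` are not collinear. Then the number of distinct subsets `C` of `PG(2,q^3)`
that are the zero locus of the base change to `K` of some nonzero quadratic form on `F^3`
and contain `P` is exactly `q^2+q+1`. -/
theorem card_special_conics (q : ℕ) (F K : Type*) [Field F] [Field K]
    [Algebra F K] [Fintype F] [Fintype K]
    (hF : Fintype.card F = q) (hK : Fintype.card K = q ^ 3)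
    (v : Fin 3 → K) (hv : v ≠ 0)
    (hvq : (fun i => v i ^ q) ≠ 0) (hvq2 : (fun i => v i ^ q ^ 2) ≠ 0)
    (hnc : ¬ Collinear3 K (Projectivization.mk K v hv)
      (Projectivization.mk K (fun i => v i ^ q) hvq)
      (Projectivization.mk K (fun i => v i ^ q ^ 2) hvq2)) :
    {C : Set (ℙ K (Fin 3 → K)) |
        (∃ Q : QuadraticForm F (Fin 3 → F), Q ≠ 0 ∧ C = zeroLocus F K Q) ∧
        Projectivization.mk K v hv ∈ C}.ncard = q ^ 2 + q + 1 := by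
  subst hF
  set σ := FiniteField.frobeniusAlgHom F K
  have hq : 2 ≤ Fintype.card F := Fintype.one_lt_card
  have hσ (x : K) : σ (σ (σ x)) = x := by
    simp only [σ, FiniteField.coe_frobeniusAlgHom, ← pow_mul, ← pow_three', ← hK,
      FiniteField.pow_card]
  have hσv : σ ∘ σ ∘ v = fun i => v i ^ Fintype.card F ^ 2 := funext fun i => by
    change (v i ^ Fintype.card F) ^ Fintype.card F = _
    rw [← pow_mul, _root_.sq]
  have hli : LinearIndependent K ![v, σ ∘ v, σ ∘ σ ∘ v] := by
    rw [hσv]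
    exact linearIndependent_of_not_collinear3 hv hvq hvq2 hnc
  have hK4 : 4 ≤ Fintype.card K := hK ▸ le_trans (by norm_num) (Nat.pow_le_pow_left hq 3)
  have hfinrank : Module.finrank F K = 3 := by
    rw [Module.card_eq_pow_finrank (K := F)] at hK
    exact Nat.pow_right_injective hq hK
  rw [ncard_conics_through_eq_card_projectivization hσ hli hK4
      (fun x hx => FiniteField.mem_range_algebraMap_of_pow_card_eq_self hx) hv,
    Projectivization.card_of_finrank F _ (finrank_ker_evalBaseChangeₗ hσ hli hfinrank)]
  simp only [Nat.card_eq_fintype_card, Finset.sum_range_succ, Finset.range_one,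
    Finset.sum_singleton, pow_zero, pow_one]
  ring
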